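/- Let B0^even, B0^odd, B1^even, B1^odd denote the even-degree and odd-degree parts of the series B0(T) = Σ_{m≥0} (6m)!/((2m)!(3m)!) (−T)^m and B1(T) = Σ_{m≥0} ((1+6m)/(1−6m)) (6m)!/((2m)!(3m)!) (−T)^m. Then B0^even(T)·B1^even(T) − B0^odd(T)·B1^odd(T) = 1 in ℚ[[T]]. -/

import Mathlib

open PowerSeries

/-- The coefficient of `T^m` in the Faber–Zagier series `B0`. -/
noncomputable def b0coeff (m : ℕ) : ℚ :=
  (-1) ^ m * (Nat.factorial (6 * m) : ℚ) /
    ((Nat.factorial (2 * m) : ℚ) * (Nat.factorial (3 * m) : ℚ))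

/-- The coefficient of `T^m` in the Faber–Zagier series `B1`. -/
noncomputable def b1coeff (m : ℕ) : ℚ :=
  (-1) ^ m * ((1 + 6 * (m : ℚ)) / (1 - 6 * (m : ℚ))) * (Nat.factorial (6 * m) : ℚ) /
    ((Nat.factorial (2 * m) : ℚ) * (Nat.factorial (3 * m) : ℚ))

/-- Even part of `B0`. -/
noncomputable def B0even : PowerSeries ℚ :=
  PowerSeries.mk fun m => if Even m then b0coeff m else 0

/-- Odd part of `B0`. -/
noncomputable def B0odd : PowerSeries ℚ :=
  PowerSeries.mk fun m => if ¬ Even m then b0coeff m else 0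

/-- Even part of `B1`. -/
noncomputable def B1even : PowerSeries ℚ :=
  PowerSeries.mk fun m => if Even m then b1coeff m else 0

/-- Odd part of `B1`. -/
noncomputable def B1odd : PowerSeries ℚ :=
  PowerSeries.mk fun m => if ¬ Even m then b1coeff m else 0

/-!
Splitting into even and odd parts gives `2 (B0ᵉ B1ᵉ - B0ᵒ B1ᵒ) = B0(T) B1(-T) + B0(-T) B1(T)`.
The coefficient recurrence `(m + 1) b(m + 1) = -12 (6m + 1) (6m + 5) b(m)` says that `f = B0`
solves `f' = (P f')' + Q f` with the even coefficients `P = -432 T²`, `Q = -60`, and it gives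
`B1 = B0 + 144 T B0 + 864 T² B0'`. For such an equation `g(T) = f(-T)` solves
`g' = -(P g')' - Q g`, so `f g - P (g f' - f g')` has derivative zero and equals its constant
term, `1` for `B0`. Substituting `B1` into the right-hand side above gives twice this expression.
-/

namespace PowerSeries

variable {R : Type*} [CommRing R]

noncomputable def evenPart (f : R⟦X⟧) : R⟦X⟧ := mk fun n => if Even n then coeff n f else 0

noncomputable def oddPart (f : R⟦X⟧) : R⟦X⟧ := mk fun n => if ¬ Even n then coeff n f else 0

theorem evenPart_mk (a : ℕ → R) : evenPart (mk a) = mk fun n => if Even n then a n else 0 := by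
  simp [evenPart]

theorem oddPart_mk (a : ℕ → R) : oddPart (mk a) = mk fun n => if ¬ Even n then a n else 0 := by
  simp [oddPart]

theorem evenPart_add_oddPart (f : R⟦X⟧) : evenPart f + oddPart f = f := by
  ext n
  by_cases h : Even n <;> simp [evenPart, oddPart, h]

theorem rescale_neg_one_eq_evenPart_sub_oddPart (f : R⟦X⟧) :
    rescale (-1) f = evenPart f - oddPart f := by
  ext n
  rcases Nat.even_or_odd n with h | h
  · simp [evenPart, oddPart, coeff_rescale, h, h.neg_one_pow, Nat.not_odd_iff_even.mpr h]
  · simp [evenPart, oddPart, coeff_rescale, Nat.not_even_iff_odd.mpr h, h.neg_one_pow]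

theorem two_mul_evenPart_mul_sub_oddPart_mul (f g : R⟦X⟧) :
    2 * (evenPart f * evenPart g - oddPart f * oddPart g) =
      f * rescale (-1) g + rescale (-1) f * g := by
  rw [rescale_neg_one_eq_evenPart_sub_oddPart, rescale_neg_one_eq_evenPart_sub_oddPart]
  linear_combination (evenPart g - oddPart g) * evenPart_add_oddPart f +
    (evenPart f - oddPart f) * evenPart_add_oddPart g

theorem rescale_C (a r : R) : rescale a (C r) = C r := by
  ext (_ | n) <;> simp [coeff_rescale, coeff_C]

theorem constantCoeff_rescale (a : R) (f : R⟦X⟧) :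
    constantCoeff (rescale a f) = constantCoeff f := by
  rw [← coeff_zero_eq_constantCoeff_apply, coeff_rescale, pow_zero, one_mul,
    coeff_zero_eq_constantCoeff_apply]

theorem rescale_neg_one_derivative (f : R⟦X⟧) :
    rescale (-1) (d⁄dX R f) = -d⁄dX R (rescale (-1) f) := by
  ext n
  simp [coeff_rescale, coeff_derivative, pow_succ]
  ring

theorem coeff_X_mul_derivative (f : R⟦X⟧) (n : ℕ) :
    coeff n (X * d⁄dX R f) = n * coeff n f := by
  cases n <;> simp [coeff_derivative, mul_comm]

theorem derivative_rescale_neg_one_of_ode {P Q f : R⟦X⟧} (hP : rescale (-1) P = P)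
    (hQ : rescale (-1) Q = Q) (hf : d⁄dX R f = d⁄dX R (P * d⁄dX R f) + Q * f) :
    d⁄dX R (rescale (-1) f) = -d⁄dX R (P * d⁄dX R (rescale (-1) f)) - Q * rescale (-1) f := by
  have h := congrArg (rescale (-1)) hf
  simp only [map_add, map_mul, rescale_neg_one_derivative, hP, hQ, mul_neg, map_neg] at h
  linear_combination -h

theorem derivative_mul_rescale_neg_one_sub_eq_zero {P Q f : R⟦X⟧} (hP : rescale (-1) P = P)
    (hQ : rescale (-1) Q = Q) (hf : d⁄dX R f = d⁄dX R (P * d⁄dX R f) + Q * f) :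
    d⁄dX R (f * rescale (-1) f -
      P * (rescale (-1) f * d⁄dX R f - f * d⁄dX R (rescale (-1) f))) = 0 := by
  have hg := derivative_rescale_neg_one_of_ode hP hQ hf
  set g := rescale (-1) f
  -- kept opaque so that the Leibniz rule below only expands the outer products
  set F := P * d⁄dX R f
  set G := P * d⁄dX R g
  have hK : P * (g * d⁄dX R f - f * d⁄dX R g) = g * F - f * G := by ring
  rw [hK]
  simp only [map_sub, Derivation.leibniz, smul_eq_mul]
  linear_combination g * hf + f * hg

end PowerSeries

theorem b0coeff_zero : b0coeff 0 = 1 := by simp [b0coeff]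

theorem succ_mul_b0coeff_succ (m : ℕ) :
    (m + 1) * b0coeff (m + 1) = -12 * (6 * m + 1) * (6 * m + 5) * b0coeff m := by
  simp only [b0coeff, Nat.mul_succ, Nat.factorial_succ]
  push_cast
  field_simp
  ring

theorem b1coeff_eq_mul_b0coeff (m : ℕ) : b1coeff m = (1 + 6 * m) / (1 - 6 * m) * b0coeff m := by
  rw [b1coeff, b0coeff]
  ring

theorem b1coeff_succ (m : ℕ) :
    b1coeff (m + 1) = b0coeff (m + 1) + 144 * (6 * m + 1) * b0coeff m := by
  have h : (1 : ℚ) - 6 * (m + 1 : ℕ) ≠ 0 := by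
    push_cast
    linarith [(m.cast_nonneg : (0 : ℚ) ≤ m)]
  rw [b1coeff_eq_mul_b0coeff, div_mul_eq_mul_div, div_eq_iff h]
  push_cast
  linear_combination 12 * succ_mul_b0coeff_succ m

noncomputable def B0 : ℚ⟦X⟧ := mk b0coeff

noncomputable def B1 : ℚ⟦X⟧ := mk b1coeff

theorem derivative_B0 :
    d⁄dX ℚ B0 = d⁄dX ℚ (C (-432) * X ^ 2 * d⁄dX ℚ B0) + C (-60) * B0 := by
  ext n
  rw [coeff_derivative, map_add, coeff_derivative, mul_assoc, coeff_C_mul, pow_two, mul_assoc X,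
    coeff_succ_X_mul, coeff_X_mul_derivative, coeff_C_mul]
  simp only [B0, coeff_mk]
  linear_combination succ_mul_b0coeff_succ n

theorem B1_eq : B1 = B0 + C 144 * X * B0 + C 864 * X ^ 2 * d⁄dX ℚ B0 := by
  ext (_ | n)
  · simp [B0, B1, b0coeff_zero, b1coeff_eq_mul_b0coeff]
  · simp [B0, B1, b1coeff_succ, mul_assoc, pow_two, coeff_X_mul_derivative]
    ring

theorem B0_mul_rescale_neg_one_B0_sub_eq_one :
    B0 * rescale (-1) B0 -
      C (-432) * X ^ 2 * (rescale (-1) B0 * d⁄dX ℚ B0 - B0 * d⁄dX ℚ (rescale (-1) B0)) = 1 := by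
  have hP : rescale (-1) (C (-432) * X ^ 2 : ℚ⟦X⟧) = C (-432) * X ^ 2 := by simp [rescale_C]
  refine derivative.ext ?_ ?_
  · rw [derivative_mul_rescale_neg_one_sub_eq_zero hP (rescale_C _ _) derivative_B0,
      derivative_one]
  · simp [constantCoeff_rescale, B0, b0coeff_zero]

theorem B0even_mul_B1even_sub_B0odd_mul_B1odd :
    B0even * B1even - B0odd * B1odd = 1 := by
  have h2 : (2 : ℚ⟦X⟧) * (B0even * B1even - B0odd * B1odd) = 2 * 1 := by
    rw [show B0even = evenPart B0 from (evenPart_mk _).symm,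
      show B0odd = oddPart B0 from (oddPart_mk _).symm,
      show B1even = evenPart B1 from (evenPart_mk _).symm,
      show B1odd = oddPart B1 from (oddPart_mk _).symm,
      two_mul_evenPart_mul_sub_oddPart_mul, B1_eq, ← B0_mul_rescale_neg_one_B0_sub_eq_one]
    simp only [map_add, map_mul, map_pow, rescale_C, rescale_neg_one_X, rescale_neg_one_derivative]
    simp only [map_neg, map_ofNat]
    ring
  have : CharZero ℚ⟦X⟧ := charZero_of_injective_algebraMap (algebraMap ℚ ℚ⟦X⟧).injective
  exact mul_left_cancel₀ two_ne_zero h2
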